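/- arXiv:1202.0266 — 3 statements merged into one kernel-verified Lean document; each statement's English description precedes it below -/
import Mathlib

section
/- In the complex reflection group G(m,p,n) with 1 < p < m and n ≥ 2, the diagonal element g = diag(ζ, ζ^{p−1}, 1, …, 1), where ζ = e^{2πi/m}, has codim(g) = 2 and reflection length ℓ(g) = 3. -/
open Module Matrix

noncomputable section

/-- The primitive m-th root of unity e^{2πi/m}. -/
def zeta (m : ℕ) : ℂ := Complex.exp (2 * Real.pi * Complex.I / m)

/-- codim of a matrix: n minus the dimension of its fixed space. -/
def codimM {n : ℕ} (M : Matrix (Fin n) (Fin n) ℂ) : ℕ :=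
  n - finrank ℂ (LinearMap.ker (M.mulVecLin - LinearMap.id))

/-- Membership in the monomial reflection group G(m,p,n): a monomial matrix with
entries m-th roots of unity whose nonzero entries multiply to an (m/p)-th root of unity. -/
def InG (m p n : ℕ) (M : Matrix (Fin n) (Fin n) ℂ) : Prop :=
  ∃ (σ : Equiv.Perm (Fin n)) (d : Fin n → ℂ),
    (∀ j, d j ^ m = 1) ∧ ((∏ j, d j) ^ (m / p) = 1) ∧
    ∀ i j, M i j = if i = σ j then d j else 0

/-- A reflection of G(m,p,n): a nonidentity element of the group fixing a hyperplane
pointwise (i.e. of codimension one). -/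
def IsReflM (m p n : ℕ) (M : Matrix (Fin n) (Fin n) ℂ) : Prop :=
  InG m p n M ∧ M ≠ 1 ∧ codimM M = 1

/-- Reflection length in G(m,p,n). -/
def reflLenM (m p n : ℕ) (M : Matrix (Fin n) (Fin n) ℂ) : ℕ :=
  sInf {k | ∃ l : List (Matrix (Fin n) (Fin n) ℂ),
    (∀ s ∈ l, IsReflM m p n s) ∧ l.length = k ∧ l.prod = M}

/-- Transposition-type reflection: swaps coordinates i and j scaling by ζ^a and ζ^{-a}. -/
def IsTranspRefl (m n : ℕ) (M : Matrix (Fin n) (Fin n) ℂ) : Prop :=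
  ∃ (i j : Fin n) (c : ℂ), i ≠ j ∧ c ^ m = 1 ∧
    M = Matrix.of (fun k l =>
      if k = i ∧ l = j then c
      else if k = j ∧ l = i then c⁻¹
      else if k = l ∧ k ≠ i ∧ k ≠ j then 1 else 0)

/-- The codimension order relation on matrices. -/
def codimLeM {n : ℕ} (a c : Matrix (Fin n) (Fin n) ℂ) : Prop :=
  codimM a + codimM (a⁻¹ * c) = codimM c

/-!
`g` is diagonal with exactly two entries different from `1`, so `codim g = 2`.

Three reflections suffice: `g = diag(ζ^p, 1) · t · t'` where `t, t'` are transposition-type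
reflections on the first two coordinates with `t t' = diag(ζ^(1-p), ζ^(p-1))`.

Two do not. If `g = s₁ s₂`, the codimensions add up, so `Fix g = Fix s₁ ∩ Fix s₂` and both `sᵢ`
fix every basis vector outside the first two coordinates; their permutations are therefore both
trivial or both the transposition of those coordinates. Two diagonal reflections would make
`diag(ζ, 1, …)` one of them, which is not in `G(m,p,n)` since `ζ^(m/p) ≠ 1`. Two
transposition-type reflections have entry products `1` on the block, whereas the entries of
`g` multiply to `ζ^p ≠ 1`.
-/

open Finset

lemma isPrimitiveRoot_zeta {m : ℕ} (hm : m ≠ 0) : IsPrimitiveRoot (zeta m) m :=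
  Complex.isPrimitiveRoot_exp m hm

section Monomial

variable {ι R : Type*} [DecidableEq ι]

def monomialMatrix [Zero R] (σ : Equiv.Perm ι) (d : ι → R) : Matrix ι ι R :=
  of fun i j => if i = σ j then d j else 0

lemma monomialMatrix_apply [Zero R] (σ : Equiv.Perm ι) (d : ι → R) (i j : ι) :
    monomialMatrix σ d i j = if i = σ j then d j else 0 := rfl

lemma monomialMatrix_one [Zero R] (d : ι → R) : monomialMatrix 1 d = diagonal d := by
  ext i j
  simp only [monomialMatrix_apply, diagonal_apply, Equiv.Perm.coe_one, id]
  split_ifs with h <;> simp [h]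

lemma perm_eq_of_monomialMatrix_eq [Zero R] {σ τ : Equiv.Perm ι} {d e : ι → R}
    (h : monomialMatrix σ d = monomialMatrix τ e) (hd : ∀ j, d j ≠ 0) : σ = τ := by
  ext j
  have := congrFun (congrFun h (σ j)) j
  simp only [monomialMatrix_apply, if_pos] at this
  by_contra hne
  exact hd j (this.trans (if_neg hne))

variable [Fintype ι] [NonAssocSemiring R]

lemma monomialMatrix_mul_monomialMatrix (σ τ : Equiv.Perm ι) (d e : ι → R) :
    monomialMatrix σ d * monomialMatrix τ e =
      monomialMatrix (σ * τ) (fun j => d (τ j) * e j) := by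
  ext i j
  rw [mul_apply, Finset.sum_eq_single (τ j)]
  · simp only [monomialMatrix_apply, if_true, ite_mul, zero_mul]
    rfl
  · intro k _ hk
    simp [monomialMatrix_apply, hk]
  · simp

lemma monomialMatrix_mulVec_apply (σ : Equiv.Perm ι) (d v : ι → R) (i : ι) :
    (monomialMatrix σ d *ᵥ v) i = d (σ.symm i) * v (σ.symm i) := by
  rw [mulVec, dotProduct, Finset.sum_eq_single (σ.symm i)]
  · simp [monomialMatrix_apply]
  · intro k _ hk
    rw [monomialMatrix_apply, if_neg fun h => hk (by rw [h, Equiv.symm_apply_apply]), zero_mul]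
  · simp

end Monomial

section FixSpace

variable {ι K : Type*} [Fintype ι] [Field K]

def fixSpace (M : Matrix ι ι K) : Submodule K (ι → K) :=
  LinearMap.ker (M.mulVecLin - LinearMap.id)

lemma mem_fixSpace {M : Matrix ι ι K} {v : ι → K} : v ∈ fixSpace M ↔ M *ᵥ v = v := by
  simp [fixSpace, sub_eq_zero]

lemma fixSpace_inf_le_fixSpace_mul (A B : Matrix ι ι K) :
    fixSpace A ⊓ fixSpace B ≤ fixSpace (A * B) := by
  rintro v ⟨hA, hB⟩
  rw [SetLike.mem_coe, mem_fixSpace] at hA hB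
  rw [mem_fixSpace, ← mulVec_mulVec, hB, hA]

variable [DecidableEq ι]

lemma mem_fixSpace_diagonal {d v : ι → K} :
    v ∈ fixSpace (diagonal d) ↔ ∀ i, d i ≠ 1 → v i = 0 := by
  simp only [mem_fixSpace, mulVec_diagonal, funext_iff]
  refine forall_congr' fun i => ?_
  constructor
  · intro h hi
    have : (d i - 1) * v i = 0 := by rw [sub_mul, h, one_mul, sub_self]
    exact (mul_eq_zero.1 this).resolve_left (sub_ne_zero.2 hi)
  · intro h
    by_cases hi : d i = 1 <;> simp [hi, h]

lemma perm_apply_eq_of_fixSpace_diagonal_le {σ : Equiv.Perm ι} {w d : ι → K}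
    (hd : ∀ k, d k ≠ 0) (h : fixSpace (diagonal w) ≤ fixSpace (monomialMatrix σ d)) {k : ι}
    (hk : w k = 1) : σ k = k := by
  have hsingle : Pi.single k 1 ∈ fixSpace (diagonal w) := by
    rw [mem_fixSpace_diagonal]
    intro l hl
    exact Pi.single_eq_of_ne (by rintro rfl; exact hl hk) 1
  by_contra hne
  have := congrFun (mem_fixSpace.1 (h hsingle)) (σ k)
  simp [monomialMatrix_apply, hne, hd] at this

end FixSpace

section Codim

variable {n : ℕ}

lemma codimM_eq (M : Matrix (Fin n) (Fin n) ℂ) : codimM M = n - finrank ℂ (fixSpace M) := rfl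

lemma finrank_fixSpace_le (M : Matrix (Fin n) (Fin n) ℂ) : finrank ℂ (fixSpace M) ≤ n := by
  simpa using Submodule.finrank_le (fixSpace M)

lemma codimM_eq_rank (M : Matrix (Fin n) (Fin n) ℂ) : codimM M = (M - 1).rank := by
  have hsub : (M - 1).mulVecLin = M.mulVecLin - LinearMap.id := by
    ext v : 1
    simp
  have h := LinearMap.finrank_range_add_finrank_ker (M - 1).mulVecLin
  rw [finrank_fin_fun, hsub] at h
  rw [codimM, rank, hsub]
  omega

lemma codimM_diagonal (d : Fin n → ℂ) : codimM (diagonal d) = #{i | d i ≠ 1} := by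
  rw [codimM_eq_rank, ← diagonal_one, diagonal_sub, rank_diagonal, Fintype.card_subtype]
  simp [sub_eq_zero]

lemma codimM_le_of_fixSpace_le {M N : Matrix (Fin n) (Fin n) ℂ}
    (h : fixSpace M ≤ fixSpace N) : codimM N ≤ codimM M := by
  have := Submodule.finrank_mono h
  rw [codimM_eq, codimM_eq]
  omega

lemma eq_one_of_codimM_eq_zero {M : Matrix (Fin n) (Fin n) ℂ} (h : codimM M = 0) : M = 1 := by
  have := finrank_fixSpace_le M
  have htop : fixSpace M = ⊤ := Submodule.eq_top_of_finrank_eq <| by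
    rw [codimM_eq] at h
    rw [finrank_fin_fun]
    omega
  rw [ext_iff_mulVec]
  intro v
  rw [one_mulVec, ← mem_fixSpace, htop]
  trivial

lemma fixSpace_mul_le_inf {A B : Matrix (Fin n) (Fin n) ℂ}
    (h : codimM A + codimM B ≤ codimM (A * B)) :
    fixSpace (A * B) ≤ fixSpace A ⊓ fixSpace B := by
  have hdim := Submodule.finrank_sup_add_finrank_inf_eq (fixSpace A) (fixSpace B)
  have hsup : finrank ℂ ↥(fixSpace A ⊔ fixSpace B) ≤ n := by
    simpa using Submodule.finrank_le (fixSpace A ⊔ fixSpace B)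
  have := finrank_fixSpace_le A
  have := finrank_fixSpace_le B
  have := finrank_fixSpace_le (A * B)
  rw [codimM_eq, codimM_eq, codimM_eq] at h
  rw [Submodule.eq_of_le_of_finrank_le (fixSpace_inf_le_fixSpace_mul A B) (by omega)]

lemma exists_eq_mulSingle_of_codimM_diagonal_eq_one {d : Fin n → ℂ}
    (h : codimM (diagonal d) = 1) : ∃ k c, d = Pi.mulSingle k c := by
  rw [codimM_diagonal, card_eq_one] at h
  obtain ⟨k, hk⟩ := h
  refine ⟨k, d k, funext fun l => ?_⟩
  rcases eq_or_ne l k with rfl | hlk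
  · simp
  · simpa [hlk] using Finset.ext_iff.1 hk l

end Codim

lemma Equiv.Perm.eq_one_or_eq_swap_of_forall_ne {α : Type*} [DecidableEq α] {σ : Equiv.Perm α}
    {i j : α} (h : ∀ k, k ≠ i → k ≠ j → σ k = k) : σ = 1 ∨ σ = Equiv.swap i j := by
  have hpair : ∀ k, k = i ∨ k = j → σ k = i ∨ σ k = j := by
    intro k hk
    by_contra! hne
    have := σ.injective (h _ hne.1 hne.2)
    rcases hk with rfl | rfl <;> simp_all
  rcases hpair i (.inl rfl) with hi | hi
  · have hj : σ j = j := by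
      rcases hpair j (.inr rfl) with hj | hj
      · rwa [σ.injective (hj.trans hi.symm)]
      · exact hj
    left
    ext k
    by_cases hk : k = i <;> by_cases hk' : k = j <;> simp_all
  · have hj : σ j = i := by
      rcases hpair j (.inr rfl) with hj | hj
      · exact hj
      · rwa [σ.injective (hi.trans hj.symm)]
    right
    ext k
    by_cases hk : k = i <;> by_cases hk' : k = j <;> simp_all [Equiv.swap_apply_def]

section Reflections

variable {m p n : ℕ}

lemma inG_monomialMatrix {σ : Equiv.Perm (Fin n)} {d : Fin n → ℂ} (hd : ∀ j, d j ^ m = 1)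
    (hprod : (∏ j, d j) ^ (m / p) = 1) : InG m p n (monomialMatrix σ d) :=
  ⟨σ, d, hd, hprod, fun _ _ => rfl⟩

lemma InG.exists_eq_monomialMatrix {M : Matrix (Fin n) (Fin n) ℂ} (h : InG m p n M) :
    ∃ σ d, (∀ j, d j ^ m = 1) ∧ (∏ j, d j) ^ (m / p) = 1 ∧ M = monomialMatrix σ d := by
  obtain ⟨σ, d, hd, hprod, hM⟩ := h
  exact ⟨σ, d, hd, hprod, Matrix.ext hM⟩

lemma isReflM_diagonal_mulSingle {i : Fin n} {c : ℂ} (hc : c ^ m = 1) (hcp : c ^ (m / p) = 1)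
    (hc1 : c ≠ 1) : IsReflM m p n (diagonal (Pi.mulSingle i c)) := by
  refine ⟨?_, fun h => hc1 ?_, ?_⟩
  · rw [← monomialMatrix_one]
    refine inG_monomialMatrix (fun j => ?_) ?_
    · rcases eq_or_ne j i with rfl | hj <;> simp [*]
    · rwa [Finset.prod_pi_mulSingle', if_pos (mem_univ i)]
  · simpa using congrFun (congrFun h i) i
  · rw [codimM_diagonal, card_eq_one]
    exact ⟨i, by ext k; rcases eq_or_ne k i with rfl | hk <;> simp [*]⟩

def transpRefl (i j : Fin n) (c : ℂ) : Matrix (Fin n) (Fin n) ℂ :=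
  monomialMatrix (Equiv.swap i j) (Pi.mulSingle i c * Pi.mulSingle j c⁻¹)

lemma transpRefl_sub_one {i j : Fin n} (hij : i ≠ j) {c : ℂ} (hc : c ≠ 0) :
    transpRefl i j c - 1 =
      vecMulVec (Pi.single j c - Pi.single i 1) (Pi.single i 1 - Pi.single j c⁻¹) := by
  ext k l
  simp only [transpRefl, Matrix.sub_apply, monomialMatrix_apply, one_apply, vecMulVec_apply,
    Pi.sub_apply, Pi.mul_apply, Pi.single_apply, Pi.mulSingle_apply, Equiv.swap_apply_def]
  split_ifs <;> simp_all

lemma isReflM_transpRefl (hm : m ≠ 0) {i j : Fin n} (hij : i ≠ j) {c : ℂ} (hc : c ^ m = 1) :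
    IsReflM m p n (transpRefl i j c) := by
  have hc0 : c ≠ 0 := (IsUnit.of_pow_eq_one hc hm).ne_zero
  have hne : transpRefl i j c ≠ 1 := by
    intro h
    simpa [transpRefl, monomialMatrix_apply, hij] using congrFun (congrFun h i) i
  refine ⟨inG_monomialMatrix (fun k => ?_) ?_, hne, ?_⟩
  · rcases eq_or_ne k i with rfl | hki <;> rcases eq_or_ne k j with rfl | hkj <;>
      simp [*, inv_pow]
  · simp [Finset.prod_mul_distrib, Finset.prod_pi_mulSingle', hc0]
  · have hle : codimM (transpRefl i j c) ≤ 1 := by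
      rw [codimM_eq_rank, transpRefl_sub_one hij hc0]
      exact rank_vecMulVec_le _ _
    have hpos : codimM (transpRefl i j c) ≠ 0 := fun h => hne (eq_one_of_codimM_eq_zero h)
    omega

lemma transpRefl_mul_transpRefl_one {i j : Fin n} (c : ℂ) :
    transpRefl i j c * transpRefl i j 1 = diagonal (Pi.mulSingle i c⁻¹ * Pi.mulSingle j c) := by
  rw [transpRefl, transpRefl, monomialMatrix_mul_monomialMatrix, Equiv.swap_mul_self,
    monomialMatrix_one]
  congr 1
  ext k
  simp only [Pi.mul_apply, Pi.mulSingle_apply, Equiv.swap_apply_def, inv_one]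
  split_ifs <;> simp_all [mul_comm]

lemma reflLenM_eq_of_forall_le {k : ℕ} {M : Matrix (Fin n) (Fin n) ℂ}
    (h : ∃ l : List (Matrix (Fin n) (Fin n) ℂ),
      (∀ s ∈ l, IsReflM m p n s) ∧ l.length = k ∧ l.prod = M)
    (hmin : ∀ l : List (Matrix (Fin n) (Fin n) ℂ),
      (∀ s ∈ l, IsReflM m p n s) → l.prod = M → k ≤ l.length) :
    reflLenM m p n M = k :=
  le_antisymm (Nat.sInf_le h) <| le_csInf ⟨k, h⟩ fun _ ⟨l, hl, hlen, hprod⟩ =>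
    hlen ▸ hmin l hl hprod

end Reflections

section TwoPointDiagonal

variable {m p n : ℕ} {i j : Fin n} {a b : ℂ}

lemma codimM_diagonal_mulSingle_mul_mulSingle (hij : i ≠ j) (ha : a ≠ 1) (hb : b ≠ 1) :
    codimM (diagonal (Pi.mulSingle i a * Pi.mulSingle j b)) = 2 := by
  rw [codimM_diagonal, card_eq_two]
  refine ⟨i, j, hij, ?_⟩
  ext k
  rcases eq_or_ne k i with rfl | hki <;> rcases eq_or_ne k j with rfl | hkj <;> simp_all

lemma exists_isReflM_prod_eq_length_three (hm : m ≠ 0) (hij : i ≠ j) (ha : a ^ m = 1)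
    (hb : b ^ m = 1) (hab : (a * b) ^ (m / p) = 1) (hab1 : a * b ≠ 1) :
    ∃ l : List (Matrix (Fin n) (Fin n) ℂ), (∀ s ∈ l, IsReflM m p n s) ∧ l.length = 3 ∧
      l.prod = diagonal (Pi.mulSingle i a * Pi.mulSingle j b) := by
  have hb0 : b ≠ 0 := (IsUnit.of_pow_eq_one hb hm).ne_zero
  refine ⟨[diagonal (Pi.mulSingle i (a * b)), transpRefl i j b, transpRefl i j 1], ?_, rfl, ?_⟩
  · simp only [List.mem_cons, List.not_mem_nil, or_false]
    rintro s (rfl | rfl | rfl)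
    · exact isReflM_diagonal_mulSingle (by rw [mul_pow, ha, hb, one_mul]) hab hab1
    · exact isReflM_transpRefl hm hij hb
    · exact isReflM_transpRefl hm hij (one_pow m)
  · rw [List.prod_cons, List.prod_cons, List.prod_singleton, transpRefl_mul_transpRefl_one,
      diagonal_mul_diagonal, ← Pi.mul_def, ← mul_assoc, ← Pi.mulSingle_mul,
      mul_inv_cancel_right₀ hb0]

lemma two_le_codimM_monomialMatrix_swap (hij : i ≠ j) {d : Fin n → ℂ} (hd : d i * d j ≠ 1) :
    2 ≤ codimM (monomialMatrix (Equiv.swap i j) d) := by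
  rw [← codimM_diagonal_mulSingle_mul_mulSingle hij zero_ne_one zero_ne_one]
  refine codimM_le_of_fixSpace_le fun v hv => ?_
  have hvi := congrFun (mem_fixSpace.1 hv) i
  have hvj := congrFun (mem_fixSpace.1 hv) j
  simp only [monomialMatrix_mulVec_apply, Equiv.symm_swap, Equiv.swap_apply_left,
    Equiv.swap_apply_right] at hvi hvj
  have hj0 : v j = 0 := by
    have : (d i * d j - 1) * v j = 0 := by linear_combination d i * hvi + hvj
    exact (mul_eq_zero.1 this).resolve_left (sub_ne_zero.2 hd)
  have hi0 : v i = 0 := by rw [← hvi, hj0, mul_zero]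
  rw [mem_fixSpace_diagonal]
  intro k hk
  rcases eq_or_ne k i with rfl | hki
  · exact hi0
  rcases eq_or_ne k j with rfl | hkj
  · exact hj0
  simp [hki, hkj] at hk

lemma pow_eq_one_of_diagonal_mul_diagonal_eq (hij : i ≠ j) (ha : a ≠ 1) (hb : b ≠ 1)
    {d₁ d₂ : Fin n → ℂ} (hc₁ : codimM (diagonal d₁) = 1) (hc₂ : codimM (diagonal d₂) = 1)
    (hp₁ : (∏ k, d₁ k) ^ (m / p) = 1) (hp₂ : (∏ k, d₂ k) ^ (m / p) = 1)
    (h : diagonal d₁ * diagonal d₂ = diagonal (Pi.mulSingle i a * Pi.mulSingle j b)) :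
    a ^ (m / p) = 1 := by
  obtain ⟨k₁, c₁, rfl⟩ := exists_eq_mulSingle_of_codimM_diagonal_eq_one hc₁
  obtain ⟨k₂, c₂, rfl⟩ := exists_eq_mulSingle_of_codimM_diagonal_eq_one hc₂
  rw [diagonal_mul_diagonal, ← Pi.mul_def] at h
  have hi := congrFun (diagonal_injective h) i
  have hj := congrFun (diagonal_injective h) j
  rw [Finset.prod_pi_mulSingle', if_pos (mem_univ _)] at hp₁ hp₂
  simp only [Pi.mul_apply, Pi.mulSingle_apply] at hi hj
  split_ifs at hi hj <;> simp_all

lemma monomialMatrix_swap_mul_ne (hij : i ≠ j) (hab : a * b ≠ 1) {d₁ d₂ : Fin n → ℂ}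
    (hc₁ : codimM (monomialMatrix (Equiv.swap i j) d₁) = 1)
    (hc₂ : codimM (monomialMatrix (Equiv.swap i j) d₂) = 1) :
    monomialMatrix (Equiv.swap i j) d₁ * monomialMatrix (Equiv.swap i j) d₂ ≠
      diagonal (Pi.mulSingle i a * Pi.mulSingle j b) := by
  intro h
  rw [monomialMatrix_mul_monomialMatrix, Equiv.swap_mul_self, monomialMatrix_one] at h
  have hi := congrFun (diagonal_injective h) i
  have hj := congrFun (diagonal_injective h) j
  simp only [Equiv.swap_apply_left, Equiv.swap_apply_right, Pi.mul_apply, Pi.mulSingle_eq_same,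
    Pi.mulSingle_eq_of_ne hij, Pi.mulSingle_eq_of_ne hij.symm, mul_one, one_mul] at hi hj
  have hprod : d₁ i * d₁ j * (d₂ i * d₂ j) ≠ 1 := by
    rw [← hi, ← hj] at hab
    exact fun h' => hab (by linear_combination h')
  by_cases h₁ : d₁ i * d₁ j = 1
  · rw [h₁, one_mul] at hprod
    have := two_le_codimM_monomialMatrix_swap hij hprod
    omega
  · have := two_le_codimM_monomialMatrix_swap hij h₁
    omega

lemma isReflM_mul_isReflM_ne (hm : m ≠ 0) (hij : i ≠ j) (ha : a ≠ 1) (hb : b ≠ 1)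
    (hap : a ^ (m / p) ≠ 1) (hab : a * b ≠ 1) {s₁ s₂ : Matrix (Fin n) (Fin n) ℂ}
    (h₁ : IsReflM m p n s₁) (h₂ : IsReflM m p n s₂) :
    s₁ * s₂ ≠ diagonal (Pi.mulSingle i a * Pi.mulSingle j b) := by
  intro h
  obtain ⟨hG₁, -, hc₁⟩ := h₁
  obtain ⟨hG₂, -, hc₂⟩ := h₂
  obtain ⟨σ₁, d₁, hd₁, hp₁, rfl⟩ := hG₁.exists_eq_monomialMatrix
  obtain ⟨σ₂, d₂, hd₂, hp₂, rfl⟩ := hG₂.exists_eq_monomialMatrix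
  have hd₁0 (k : Fin n) : d₁ k ≠ 0 := (IsUnit.of_pow_eq_one (hd₁ k) hm).ne_zero
  have hd₂0 (k : Fin n) : d₂ k ≠ 0 := (IsUnit.of_pow_eq_one (hd₂ k) hm).ne_zero
  have hfix := fixSpace_mul_le_inf (A := monomialMatrix σ₁ d₁) (B := monomialMatrix σ₂ d₂)
    (by rw [hc₁, hc₂, h, codimM_diagonal_mulSingle_mul_mulSingle hij ha hb])
  rw [h] at hfix
  have hσ₁ := Equiv.Perm.eq_one_or_eq_swap_of_forall_ne (i := i) (j := j) fun k hki hkj =>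
    perm_apply_eq_of_fixSpace_diagonal_le hd₁0 (hfix.trans inf_le_left) (by simp [hki, hkj])
  have hσ₂ := Equiv.Perm.eq_one_or_eq_swap_of_forall_ne (i := i) (j := j) fun k hki hkj =>
    perm_apply_eq_of_fixSpace_diagonal_le hd₂0 (hfix.trans inf_le_right) (by simp [hki, hkj])
  have hσ : σ₁ * σ₂ = 1 := by
    rw [monomialMatrix_mul_monomialMatrix, ← monomialMatrix_one] at h
    exact perm_eq_of_monomialMatrix_eq h fun k => mul_ne_zero (hd₁0 _) (hd₂0 k)
  rcases hσ₁ with rfl | rfl <;> rcases hσ₂ with rfl | rfl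
  · simp only [monomialMatrix_one] at h hc₁ hc₂
    exact hap (pow_eq_one_of_diagonal_mul_diagonal_eq hij ha hb hc₁ hc₂ hp₁ hp₂ h)
  · simp [Equiv.swap_eq_one_iff, hij] at hσ
  · simp [Equiv.swap_eq_one_iff, hij] at hσ
  · exact monomialMatrix_swap_mul_ne hij hab hc₁ hc₂ h

lemma three_le_length_of_isReflM_prod_eq (hm : m ≠ 0) (hij : i ≠ j) (ha : a ≠ 1)
    (hb : b ≠ 1) (hap : a ^ (m / p) ≠ 1) (hab : a * b ≠ 1) {l : List (Matrix (Fin n) (Fin n) ℂ)}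
    (hl : ∀ s ∈ l, IsReflM m p n s)
    (h : l.prod = diagonal (Pi.mulSingle i a * Pi.mulSingle j b)) :
    3 ≤ l.length := by
  rcases l with _ | ⟨s₁, _ | ⟨s₂, _ | ⟨s₃, l⟩⟩⟩
  · exact absurd (by simpa [hij.symm] using (congrFun (congrFun h i) i).symm) ha
  · have := (hl s₁ (by simp)).2.2
    rw [List.prod_singleton] at h
    rw [h, codimM_diagonal_mulSingle_mul_mulSingle hij ha hb] at this
    omega
  · exact absurd (by simpa using h) <|
      isReflM_mul_isReflM_ne hm hij ha hb hap hab (hl s₁ (by simp)) (hl s₂ (by simp))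
  · simp

end TwoPointDiagonal

theorem gmpn_length_ne_codim (m p n : ℕ) (hp1 : 1 < p) (hpm : p < m) (hdvd : p ∣ m)
    (hn : 2 ≤ n) (g : Matrix (Fin n) (Fin n) ℂ)
    (hg : g = Matrix.diagonal (fun i : Fin n =>
      if i = ⟨0, by omega⟩ then zeta m
      else if i = ⟨1, by omega⟩ then zeta m ^ (p - 1) else 1)) :
    codimM g = 2 ∧ reflLenM m p n g = 3 := by
  set i : Fin n := ⟨0, by omega⟩
  set j : Fin n := ⟨1, by omega⟩
  have hij : i ≠ j := by simp [i, j, Fin.ext_iff]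
  have hg' : g = diagonal (Pi.mulSingle i (zeta m) * Pi.mulSingle j (zeta m ^ (p - 1))) := by
    rw [hg]
    congr 1
    ext k
    simp only [Pi.mul_apply, Pi.mulSingle_apply]
    split_ifs <;> simp_all
  have hζ := isPrimitiveRoot_zeta (m := m) (by omega)
  have ha : zeta m ≠ 1 := hζ.ne_one (by omega)
  have hb : zeta m ^ (p - 1) ≠ 1 := hζ.pow_ne_one_of_pos_of_lt (by omega) (by omega)
  have hab : zeta m * zeta m ^ (p - 1) = zeta m ^ p := by
    rw [← pow_succ']
    congr 1
    omega
  have hab1 : zeta m * zeta m ^ (p - 1) ≠ 1 := hab ▸ hζ.pow_ne_one_of_pos_of_lt (by omega) hpm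
  rw [hg']
  refine ⟨codimM_diagonal_mulSingle_mul_mulSingle hij ha hb, reflLenM_eq_of_forall_le ?_ ?_⟩
  · refine exists_isReflM_prod_eq_length_three (by omega) hij hζ.pow_eq_one ?_ ?_ hab1
    · rw [← pow_mul, mul_comm, pow_mul, hζ.pow_eq_one, one_pow]
    · rw [hab, ← pow_mul, Nat.mul_div_cancel' hdvd, hζ.pow_eq_one]
  · refine fun l hl h => three_le_length_of_isReflM_prod_eq (by omega) hij ha hb ?_ hab1 hl h
    exact hζ.pow_ne_one_of_pos_of_lt (Nat.div_pos hpm.le (by omega)).ne'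
      (Nat.div_lt_self (by omega) hp1)
end
end

section
/- In G(m,p,n), every nonidentity diagonal element factors in G(m,p,n) into p-connected diagonal elements with codimensions adding. -/
open Module Matrix

noncomputable section

/-- Diagonal element of G(m,_,n) with eigenvalue exponents c. -/
def DiagOf (m : ℕ) {n : ℕ} (c : Fin n → ZMod m) : Matrix (Fin n) (Fin n) ℂ :=
  Matrix.diagonal (fun i => zeta m ^ (c i).val)

/-- Indices of the non-1 eigenvalues. -/
def supportC {m n : ℕ} (c : Fin n → ZMod m) : Finset (Fin n) :=
  Finset.univ.filter (fun i => c i ≠ 0)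

/-- p-connectedness: p divides the sum of the non-1 eigenvalue exponents, but p does not
divide the sum over any proper nonempty subset of them. -/
def PConnected (m p : ℕ) {n : ℕ} (c : Fin n → ZMod m) : Prop :=
  (supportC c).Nonempty ∧ ((p : ZMod m) ∣ ∑ i ∈ supportC c, c i) ∧
    ∀ I ⊆ supportC c, I.Nonempty → I ≠ supportC c → ¬ (p : ZMod m) ∣ ∑ i ∈ I, c i

lemma zeta_prim {m : ℕ} (hm : 0 < m) : IsPrimitiveRoot (zeta m) m := by
  simpa [zeta] using Complex.isPrimitiveRoot_exp m hm.ne'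

lemma zeta_pow_eq_one_iff {m : ℕ} (hm : 0 < m) (k : ℕ) : zeta m ^ k = 1 ↔ m ∣ k :=
  (zeta_prim hm).pow_eq_one_iff_dvd k

lemma zeta_pow_mod {m : ℕ} (hm : 0 < m) (k : ℕ) : zeta m ^ (k % m) = zeta m ^ k := by
  conv_rhs => rw [← Nat.div_add_mod k m]
  rw [pow_add, pow_mul, (zeta_pow_eq_one_iff hm m).2 dvd_rfl, one_pow, one_mul]

lemma DiagOf_mul {m : ℕ} (hm : 0 < m) {n : ℕ} (a b : Fin n → ZMod m) :
    DiagOf m a * DiagOf m b = DiagOf m (a + b) := by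
  haveI : NeZero m := ⟨hm.ne'⟩
  unfold DiagOf
  rw [Matrix.diagonal_mul_diagonal]
  have h : (fun i => zeta m ^ (a i).val * zeta m ^ (b i).val)
      = fun i => zeta m ^ ((a + b) i).val := by
    funext i
    simp only [Pi.add_apply, ZMod.val_add]
    rw [zeta_pow_mod hm, pow_add]
  rw [h]

lemma DiagOf_zero {m : ℕ} (hm : 0 < m) {n : ℕ} : DiagOf m (0 : Fin n → ZMod m) = 1 := by
  haveI : NeZero m := ⟨hm.ne'⟩
  unfold DiagOf
  simp [ZMod.val_zero]

lemma codim_DiagOf {m : ℕ} (hm : 0 < m) {n : ℕ} (c : Fin n → ZMod m) :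
    codimM (DiagOf m c) = (supportC c).card := by
  classical
  haveI : NeZero m := ⟨hm.ne'⟩
  have hsub : (DiagOf m c).mulVecLin - LinearMap.id
      = (Matrix.diagonal (fun i => zeta m ^ (c i).val - 1)).mulVecLin := by
    apply LinearMap.ext; intro v; funext i
    simp [DiagOf, Matrix.mulVecLin_apply, Matrix.mulVec_diagonal, sub_mul]
  rw [codimM, hsub]
  have hrk := LinearMap.finrank_range_add_finrank_ker
    ((Matrix.diagonal (fun i => zeta m ^ (c i).val - 1)).mulVecLin)
  have hrank : (Matrix.diagonal (fun i => zeta m ^ (c i).val - 1)).rank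
      = Fintype.card {i // zeta m ^ (c i).val - 1 ≠ 0} := Matrix.rank_diagonal _
  rw [Matrix.rank] at hrank
  have hdim : finrank ℂ (Fin n → ℂ) = n := by simp
  have hcard : Fintype.card {i // zeta m ^ (c i).val - 1 ≠ 0} = (supportC c).card := by
    rw [Fintype.card_subtype]
    congr 1
    apply Finset.filter_congr
    intro i _
    constructor
    · intro h hc; apply h; simp [hc, ZMod.val_zero]
    · intro hc h
      have h1 : zeta m ^ (c i).val = 1 := by linear_combination h
      have := (zeta_pow_eq_one_iff hm _).1 h1
      have hlt : (c i).val < m := ZMod.val_lt _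
      have h0 : (c i).val = 0 := Nat.eq_zero_of_dvd_of_lt this hlt
      exact hc (by rwa [ZMod.val_eq_zero] at h0)
  rw [hrank] at hrk
  rw [hcard, hdim] at hrk
  omega

lemma aux_factor (m p n : ℕ) (hm : 0 < m) : ∀ (k : ℕ) (c : Fin n → ZMod m),
    (supportC c).card = k → (p : ZMod m) ∣ ∑ i, c i →
    ∃ l : List (Fin n → ZMod m), (∀ e ∈ l, PConnected m p e) ∧
      (l.map (DiagOf m)).prod = DiagOf m c ∧
      (l.map (fun e => codimM (DiagOf m e))).sum = (supportC c).card := by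
  intro k
  induction k using Nat.strong_induction_on with
  | _ k ih =>
  intro c hcard hdvd
  classical
  by_cases hemp : supportC c = ∅
  · have hc0 : c = 0 := by
      funext i
      have h1 : i ∉ supportC c := by simp [hemp]
      have h2 : c i = 0 := by simpa [supportC] using h1
      simpa using h2
    subst hc0
    exact ⟨[], by simp, by simp [DiagOf_zero hm], by simp [hemp]⟩
  · have hsne : (supportC c).Nonempty := Finset.nonempty_of_ne_empty hemp
    have hsumsupp : ∑ i ∈ supportC c, c i = ∑ i, c i := by
      rw [supportC]; exact Finset.sum_filter_ne_zero _
    have hex : ∃ j, ∃ I : Finset (Fin n), I ⊆ supportC c ∧ I.Nonempty ∧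
        ((p : ZMod m) ∣ ∑ i ∈ I, c i) ∧ I.card = j :=
      ⟨(supportC c).card, supportC c, le_refl _, hsne, by rw [hsumsupp]; exact hdvd, rfl⟩
    obtain ⟨I, hIsub, hInon, hIdvd, hIcard⟩ := Nat.find_spec hex
    have hmin : ∀ J : Finset (Fin n), J ⊆ supportC c → J.Nonempty →
        J.card < I.card → ¬ (p : ZMod m) ∣ ∑ i ∈ J, c i := by
      intro J h1 h2 h3 h4
      exact Nat.find_min hex (hIcard ▸ h3) ⟨J, h1, h2, h4, rfl⟩
    set e : Fin n → ZMod m := fun i => if i ∈ I then c i else 0 with he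
    have hmemI : ∀ i ∈ I, c i ≠ 0 := fun i hi =>
      (Finset.mem_filter.1 (hIsub hi)).2
    have hsuppe : supportC e = I := by
      ext i
      simp only [supportC, Finset.mem_filter, Finset.mem_univ, true_and, he]
      constructor
      · intro h; by_contra h'; simp [h'] at h
      · intro h; simpa [h] using hmemI i h
    have hsume : ∀ J ⊆ I, ∑ i ∈ J, e i = ∑ i ∈ J, c i := by
      intro J hJ
      exact Finset.sum_congr rfl fun i hi => if_pos (hJ hi)
    have hPCe : PConnected m p e := by
      refine ⟨hsuppe ▸ hInon, ?_, ?_⟩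
      · rw [hsuppe, hsume I le_rfl]; exact hIdvd
      · intro J hJ hJne hJneq
        rw [hsuppe] at hJ hJneq
        rw [hsume J hJ]
        exact hmin J (hJ.trans hIsub) hJne
          (Finset.card_lt_card (lt_of_le_of_ne hJ hJneq))
    set c' : Fin n → ZMod m := c - e with hc'
    have hsuppc' : supportC c' = supportC c \ I := by
      ext i
      simp only [supportC, Finset.mem_filter, Finset.mem_univ, true_and,
        Finset.mem_sdiff, hc', Pi.sub_apply, he]
      by_cases hi : i ∈ I
      · simp [hi, hmemI i hi]
      · simp [hi]
    have hsume' : ∑ i, e i = ∑ i ∈ I, c i := by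
      rw [he]
      rw [Finset.sum_ite_mem, Finset.univ_inter]
    have hdvd' : (p : ZMod m) ∣ ∑ i, c' i := by
      have : ∑ i, c' i = (∑ i, c i) - ∑ i, e i := by
        simp only [hc', Pi.sub_apply, Finset.sum_sub_distrib]
      rw [this, hsume']
      exact dvd_sub hdvd hIdvd
    have hcardlt : (supportC c').card < k := by
      rw [hsuppc', Finset.card_sdiff_of_subset hIsub]
      have h1 : 1 ≤ I.card := Finset.card_pos.2 hInon
      have h2 : I.card ≤ (supportC c).card := Finset.card_le_card hIsub
      omega
    obtain ⟨l', hl'pc, hl'prod, hl'sum⟩ := ih _ hcardlt c' rfl hdvd'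
    refine ⟨e :: l', ?_, ?_, ?_⟩
    · intro x hx
      rcases List.mem_cons.1 hx with h | h
      · exact h ▸ hPCe
      · exact hl'pc x h
    · rw [List.map_cons, List.prod_cons, hl'prod, DiagOf_mul hm]
      congr 1
      funext i
      simp [hc']
    · rw [List.map_cons, List.sum_cons, hl'sum, codim_DiagOf hm, hsuppe, hsuppc',
        Finset.card_sdiff_of_subset hIsub]
      have h2 : I.card ≤ (supportC c).card := Finset.card_le_card hIsub
      omega

theorem diag_factors_into_pConnected (m p n : ℕ) (hm : 0 < m) (hp : 0 < p) (hdvd : p ∣ m)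
    (c : Fin n → ZMod m) (hne : DiagOf m c ≠ 1)
    (hmem : (p : ZMod m) ∣ ∑ i, c i) :
    ∃ l : List (Fin n → ZMod m), (∀ e ∈ l, PConnected m p e) ∧
      (l.map (DiagOf m)).prod = DiagOf m c ∧
      (l.map (fun e => codimM (DiagOf m e))).sum = codimM (DiagOf m c) := by
  obtain ⟨l, h1, h2, h3⟩ := aux_factor m p n hm _ c rfl hmem
  exact ⟨l, h1, h2, by rw [h3, codim_DiagOf hm]⟩
end
end

section
/- In the complex reflection group G(n,n,n) with n ≥ 3, the scalar matrix g = ζ·I (ζ = e^{2πi/n}) is an atom of the codimension order: g ≠ 1, codim(g) = n, and there is no h ∈ G(n,n,n) with h ≠ 1, h ≠ g, and codim(h) + codim(h⁻¹g) = codim(g). -/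
open Module Matrix

noncomputable section

/-!
If `codim h + codim (h⁻¹ g) = n` for `g = ζ • 1`, the fixed space of `h` and that of `h⁻¹ g`,
which is the `ζ`-eigenspace of `h`, meet trivially and have complementary dimensions, so `h` is
annihilated by `(X - 1) (X - ζ)`. For a monomial `h` with `h e_j = d_j e_{σ j}`, the `(σ j, j)`
entry of this relation reads `(1 + ζ) d_j = 0` when `σ j ≠ j`; as `ζ ≠ -1` for `n ≥ 3`, `h` is
diagonal with entries in `{1, ζ}`. Their product is `1`, so the number of entries equal to `ζ` is
`0` or `n`.
-/

namespace Module.End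

variable {K V : Type*} [Field K] [AddCommGroup V] [Module K V] [FiniteDimensional K V]

theorem sub_smul_one_mul_sub_smul_one_eq_zero_of_finrank_eigenspace_add (f : End K V) {a b : K}
    (hab : a ≠ b) (hdim : finrank K (f.eigenspace a) + finrank K (f.eigenspace b) = finrank K V) :
    (f - a • 1) * (f - b • 1) = 0 := by
  have hsup : f.eigenspace a ⊔ f.eigenspace b = ⊤ :=
    Submodule.eq_top_of_disjoint _ _ hdim.ge (f.disjoint_genEigenspace hab 1 1)
  have hcomm : (f - a • 1) * (f - b • 1) = (f - b • 1) * (f - a • 1) := by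
    simp only [mul_sub, sub_mul, smul_mul_assoc, mul_smul_comm, one_mul, mul_one]
    module
  rw [← LinearMap.ker_eq_top, ← top_le_iff, ← hsup, sup_le_iff]
  constructor
  · rw [hcomm, eigenspace_def]
    exact LinearMap.ker_le_ker_comp _ _
  · rw [eigenspace_def]
    exact LinearMap.ker_le_ker_comp _ _

end Module.End

namespace Matrix

variable {K ι : Type*} [Field K] [DecidableEq ι] {M : Matrix ι ι K} {σ : Equiv.Perm ι} {d : ι → K}

theorem eq_diagonal_of_monomial (hM : ∀ i j, M i j = if i = σ j then d j else 0)
    (hσ : ∀ j, σ j = j) : M = diagonal d := by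
  ext i j
  by_cases h : i = j <;> simp [hM, hσ, h]

variable [Fintype ι]

theorem eq_or_eq_of_diagonal_sub_smul_one_mul_eq_zero {a b : K}
    (hq : (diagonal d - a • 1) * (diagonal d - b • 1) = 0) (j : ι) : d j = a ∨ d j = b := by
  simp only [smul_one_eq_diagonal, diagonal_sub, diagonal_mul_diagonal] at hq
  simpa [sub_eq_zero] using congrFun (diagonal_eq_zero.1 hq) j

theorem isUnit_det_of_monomial (hM : ∀ i j, M i j = if i = σ j then d j else 0)
    (hd : ∀ j, d j ≠ 0) : IsUnit M.det := by
  have hM' : M = (diagonal d).submatrix σ.symm id := by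
    ext i j
    rcases eq_or_ne i (σ j) with rfl | h
    · simp [hM]
    · simp [hM, h, Equiv.symm_apply_eq]
  rw [hM', det_permute, det_diagonal]
  exact ((Equiv.Perm.sign σ.symm).isUnit.map (Int.castRingHom K)).mul
    (isUnit_iff_ne_zero.2 (Finset.prod_ne_zero_iff.2 fun j _ => hd j))

theorem perm_apply_eq_of_monomial_of_sub_smul_one_mul_eq_zero
    (hM : ∀ i j, M i j = if i = σ j then d j else 0) (hd : ∀ j, d j ≠ 0) {a b : K}
    (hab : a + b ≠ 0) (hq : (M - a • 1) * (M - b • 1) = 0) (j : ι) : σ j = j := by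
  by_contra hj
  have hsq : M * M = (a + b) • M - (a * b) • 1 := by
    rw [← sub_eq_zero, ← hq]
    simp only [mul_sub, sub_mul, smul_mul_assoc, mul_smul_comm, one_mul, mul_one]
    module
  have hσσ : σ j ≠ σ (σ j) := fun h => hj (σ.injective h).symm
  have hentry := congrFun (congrFun hsq (σ j)) j
  rw [mul_apply, Finset.sum_eq_single (σ j) (fun k _ hk => by simp [hM, hk]) (by simp)] at hentry
  simp [hM, hσσ, one_apply_ne hj, hab, hd] at hentry

theorem eigenspace_toLin'_inv_mul_smul_one (hM : IsUnit M.det) (c : K) :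
    End.eigenspace (toLin' (M⁻¹ * c • 1)) 1 = End.eigenspace (toLin' M) c := by
  ext v
  simp only [End.mem_eigenspace_iff, toLin'_apply, one_smul, Matrix.mul_smul, mul_one,
    smul_mulVec]
  constructor
  · intro hv
    calc M *ᵥ v = M *ᵥ (c • M⁻¹ *ᵥ v) := by rw [hv]
      _ = c • v := by rw [mulVec_smul, mulVec_mulVec, mul_nonsing_inv M hM, one_mulVec]
  · intro hv
    rw [← mulVec_smul, ← hv, mulVec_mulVec, nonsing_inv_mul M hM, one_mulVec]

end Matrix

theorem IsPrimitiveRoot.eq_one_or_eq_of_prod_eq_one {R ι : Type*} [CommMonoid R] [Fintype ι]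
    {ζ : R} {n : ℕ} (hζ : IsPrimitiveRoot ζ n) (hcard : Fintype.card ι ≤ n) {d : ι → R}
    (hd : ∀ j, d j = 1 ∨ d j = ζ) (hprod : ∏ j, d j = 1) : d = 1 ∨ d = fun _ => ζ := by
  classical
  set S := Finset.univ.filter (d · = ζ)
  have hpow : ζ ^ S.card = 1 := by
    rw [← hprod, ← Finset.prod_filter_mul_prod_filter_not Finset.univ (d · = ζ),
      Finset.prod_eq_pow_card (fun j hj => (Finset.mem_filter.1 hj).2),
      Finset.prod_eq_one (fun j hj => (hd j).resolve_right (Finset.mem_filter.1 hj).2), mul_one]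
  obtain hS | hS := Nat.eq_zero_or_pos S.card
  · left
    funext j
    exact (hd j).resolve_right
      (Finset.filter_eq_empty_iff.1 (Finset.card_eq_zero.1 hS) (Finset.mem_univ j))
  · right
    have hn : n ≤ S.card := Nat.le_of_dvd hS (hζ.dvd_of_pow_eq_one _ hpow)
    have hSuniv : S = Finset.univ :=
      Finset.eq_univ_of_card S ((Finset.card_le_univ S).antisymm (hcard.trans hn))
    funext j
    exact Finset.filter_eq_self.1 hSuniv j (Finset.mem_univ j)

section Codim

variable {n : ℕ}

theorem codimM_eq_sub_finrank_eigenspace (M : Matrix (Fin n) (Fin n) ℂ) :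
    codimM M = n - finrank ℂ (End.eigenspace (toLin' M) 1) := by
  rw [codimM, End.eigenspace_def, one_smul, toLin'_apply', End.one_eq_id]

theorem codimM_smul_one {c : ℂ} (hc : c ≠ 1) : codimM (c • 1 : Matrix (Fin n) (Fin n) ℂ) = n := by
  have hbot : End.eigenspace (toLin' (c • 1 : Matrix (Fin n) (Fin n) ℂ)) 1 = ⊥ := by
    refine (Submodule.eq_bot_iff _).2 fun v hv => ?_
    rw [End.mem_eigenspace_iff, toLin'_apply, smul_mulVec, one_mulVec, one_smul] at hv
    have : (c - 1) • v = 0 := by rw [sub_smul, hv, one_smul, sub_self]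
    simpa [sub_eq_zero, hc] using this
  rw [codimM_eq_sub_finrank_eigenspace, hbot, finrank_bot, Nat.sub_zero]

theorem sub_one_mul_sub_smul_one_eq_zero_of_codimLeM {M : Matrix (Fin n) (Fin n) ℂ}
    (hM : IsUnit M.det) {c : ℂ} (hc : c ≠ 1) (hle : codimLeM M (c • 1)) :
    (M - 1) * (M - c • 1) = 0 := by
  rw [codimLeM, codimM_smul_one hc, codimM_eq_sub_finrank_eigenspace,
    codimM_eq_sub_finrank_eigenspace, eigenspace_toLin'_inv_mul_smul_one hM] at hle
  have h1 := Submodule.finrank_le (End.eigenspace (toLin' M) 1)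
  have hc' := Submodule.finrank_le (End.eigenspace (toLin' M) c)
  rw [finrank_fin_fun] at h1 hc'
  have hq := End.sub_smul_one_mul_sub_smul_one_eq_zero_of_finrank_eigenspace_add (toLin' M) hc.symm
    (by rw [finrank_fin_fun]; omega)
  rw [one_smul] at hq
  apply toLinAlgEquiv'.injective
  rw [map_mul, map_sub, map_sub, map_smul, map_one, map_zero]
  exact hq

end Codim

theorem scalar_is_codim_atom_in_Gnnn (n : ℕ) (hn : 3 ≤ n)
    (g : Matrix (Fin n) (Fin n) ℂ) (hg : g = zeta n • (1 : Matrix (Fin n) (Fin n) ℂ)) :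
    g ≠ 1 ∧ codimM g = n ∧
      ∀ h : Matrix (Fin n) (Fin n) ℂ, InG n n n h → h ≠ 1 → h ≠ g →
        ¬ codimLeM h g := by
  have hζ : IsPrimitiveRoot (zeta n) n := Complex.isPrimitiveRoot_exp n (by omega)
  have hζ1 : zeta n ≠ 1 := hζ.ne_one (by omega)
  have hζneg : 1 + zeta n ≠ 0 := fun h => by
    have h2 := IsPrimitiveRoot.neg_one (R := ℂ) 0 two_ne_zero.symm
    rw [show (-1 : ℂ) = zeta n by linear_combination -h] at h2
    have := hζ.unique h2
    omega
  subst hg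
  refine ⟨fun h => hζ1 (by simpa using congrFun (congrFun h ⟨0, by omega⟩) ⟨0, by omega⟩),
    codimM_smul_one hζ1, ?_⟩
  rintro h ⟨σ, d, hd, hprod, hM⟩ hh1 hhg hle
  have hd0 : ∀ j, d j ≠ 0 := fun j h0 => by simpa [h0, zero_pow (by omega : n ≠ 0)] using hd j
  have hq : (h - (1 : ℂ) • 1) * (h - zeta n • 1) = 0 := by
    rw [one_smul]
    exact sub_one_mul_sub_smul_one_eq_zero_of_codimLeM (isUnit_det_of_monomial hM hd0) hζ1 hle
  have hdiag := eq_diagonal_of_monomial hM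
    (perm_apply_eq_of_monomial_of_sub_smul_one_mul_eq_zero hM hd0 hζneg hq)
  subst hdiag
  rcases hζ.eq_one_or_eq_of_prod_eq_one (by simp) (eq_or_eq_of_diagonal_sub_smul_one_mul_eq_zero hq)
    (by simpa [Nat.div_self (by omega : 0 < n)] using hprod) with rfl | rfl
  · exact hh1 diagonal_one
  · exact hhg (smul_one_eq_diagonal _).symm

end
end
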